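/- Let Γ = (C, A, Δ) be a normed BPA system. For every R ⊆ C_G, the R-bisimilarity ≃_R is a decreasing bisimulation. -/

import Mathlib

open Relation

/-- A BPA system over constants `C` and actions `A`: a distinguished silent
action `tau`, and a finite set of transition rules `X —ℓ→ α`, where `C` and
`A` are finite. -/
structure BPA (C A : Type) where
  tau : A
  rules : Set (C × A × List C)
  finC : Finite C
  finA : Finite A
  finRules : rules.Finite

namespace BPA

variable {C A : Type}

/-- One-step labelled transition between processes.  Processes are strings
over `C` (lists, with the leftmost constant acting first). -/
def Step (Γ : BPA C A) (ℓ : A) (p q : List C) : Prop :=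
  ∃ X γ β, (X, ℓ, γ) ∈ Γ.rules ∧ p = X :: β ∧ q = γ ++ β

/-- A transition carrying an arbitrary label. -/
def AnyStep (Γ : BPA C A) (p q : List C) : Prop := ∃ ℓ, Γ.Step ℓ p q

/-- `⟹` : the reflexive transitive closure of silent steps. -/
def TauStar (Γ : BPA C A) : List C → List C → Prop := ReflTransGen (Γ.Step Γ.tau)

/-- A process is normed if it can reach the empty process `ε`. -/
def NormedProc (Γ : BPA C A) (p : List C) : Prop := ReflTransGen Γ.AnyStep p []

/-- The BPA system is normed. -/
def Normed (Γ : BPA C A) : Prop := ∀ X : C, Γ.NormedProc [X]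

/-- A chain of `s`-steps starting at `start` in which every visited state is
related by `r` to the process `anchor`. -/
def RelChain (s : List C → List C → Prop) (r : List C → List C → Prop)
    (anchor : List C) : List C → List C → Prop :=
  ReflTransGen fun x y => s x y ∧ r anchor y

/-- Branching bisimulation (an equivalence relation by convention). -/
def IsBranchingBisim (Γ : BPA C A) (r : List C → List C → Prop) : Prop :=
  Equivalence r ∧ ∀ α β, r α β →
    ((∀ a, a ≠ Γ.tau → ∀ α', Γ.Step a α α' →
        ∃ β'' β', RelChain (Γ.Step Γ.tau) r β β β'' ∧ Γ.Step a β'' β' ∧ r α' β') ∧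
     (∀ α', Γ.Step Γ.tau α α' → ¬ r α α' →
        ∃ β'' β', RelChain (Γ.Step Γ.tau) r β β β'' ∧ Γ.Step Γ.tau β'' β' ∧
          ¬ r β'' β' ∧ r α' β'))

/-- Branching bisimilarity `≃` : the largest branching bisimulation. -/
def Bisim (Γ : BPA C A) (α β : List C) : Prop :=
  ∃ r, Γ.IsBranchingBisim r ∧ r α β

/-- A ground process: it can silently reach `ε`. -/
def Ground (Γ : BPA C A) (p : List C) : Prop := Γ.TauStar p []

/-- The set `C_G` of ground constants. -/
def GroundC (Γ : BPA C A) : Set C := {X | Γ.Ground [X]}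

/-- `R`-equality `=_R`: the two processes differ only in suffixes over `R`. -/
def REq (R : Set C) (α β : List C) : Prop :=
  ∃ ζ a b, α = ζ ++ a ∧ β = ζ ++ b ∧ (∀ X ∈ a, X ∈ R) ∧ (∀ X ∈ b, X ∈ R)

open Classical in
/-- The `R`-normal form `α_R` of a process: delete the maximal suffix over `R`. -/
noncomputable def nf (R : Set C) (α : List C) : List C :=
  (α.reverse.dropWhile fun X => decide (X ∈ R)).reverse

/-- A process is in `R`-normal form. -/
def InNF (R : Set C) (α : List C) : Prop := nf R α = α

/-- The `R`-transition relation `—ℓ→_R` between `R`-normal forms. -/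
def StepR (Γ : BPA C A) (R : Set C) (ℓ : A) (ζ η : List C) : Prop :=
  ∃ α β, ζ = nf R α ∧ η = nf R β ∧ Γ.Step ℓ α β

/-- `⟹_R`. -/
def TauStarR (Γ : BPA C A) (R : Set C) : List C → List C → Prop :=
  ReflTransGen (Γ.StepR R Γ.tau)

/-- `R`-bisimulation: an equivalence relation containing `=_R` satisfying
ground preservation and the relativized branching transfer conditions. -/
def IsRBisim (Γ : BPA C A) (R : Set C) (r : List C → List C → Prop) : Prop :=
  Equivalence r ∧ (∀ α β, REq R α β → r α β) ∧
  ∀ α β, r α β →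
    ((Γ.TauStar α [] → Γ.TauStar β []) ∧
     (∀ α', Γ.Step Γ.tau α α' → ¬ r α α' →
        ∃ β'' β', RelChain (Γ.StepR R Γ.tau) r β (nf R β) β'' ∧
          Γ.StepR R Γ.tau β'' β' ∧ ¬ r β'' β' ∧ r α' β') ∧
     (∀ a, a ≠ Γ.tau → ∀ α', Γ.Step a α α' →
        ∃ β'' β', RelChain (Γ.StepR R Γ.tau) r β (nf R β) β'' ∧
          Γ.StepR R a β'' β' ∧ r α' β'))

/-- `R`-bisimilarity `≃_R` : the largest `R`-bisimulation. -/
def RBisim (Γ : BPA C A) (R : Set C) (α β : List C) : Prop :=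
  ∃ r, Γ.IsRBisim R r ∧ r α β

/-- `Id_R = {X ∈ C : X ≃_R ε}`. -/
def IdR (Γ : BPA C A) (R : Set C) : Set C := {X | Γ.RBisim R [X] []}

/-- `Rd_R(γ) = {X ∈ C : Xγ ≃_R γ}`. -/
def RdR (Γ : BPA C A) (R : Set C) (γ : List C) : Set C :=
  {X | Γ.RBisim R (X :: γ) γ}

/-- An admissible reference set: `R = Id_R`. -/
def Admissible (Γ : BPA C A) (R : Set C) : Prop := R = Γ.IdR R

end BPA

namespace BPA

variable {C A : Type}

/-- A witness that the `r`-norm of `α` is at most `k`: a sequence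
`α ≍ γ₁ —ℓ₁→ δ₁, δ₁ ≍ γ₂ —ℓ₂→ δ₂, …, δ_k ≍ ε` of `k` single transitions
interleaved with `r`. -/
inductive NormWitness (Γ : BPA C A) (r : List C → List C → Prop) :
    List C → ℕ → Prop
  | zero (α : List C) : r α [] → NormWitness Γ r α 0
  | succ (α γ δ : List C) (ℓ : A) (k : ℕ) :
      r α γ → Γ.Step ℓ γ δ → NormWitness Γ r δ k → NormWitness Γ r α (k + 1)

/-- The semantic `r`-norm `‖α‖_r` of a process: the least `k` admitting a
norm witness (`⊤` if there is none). -/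
noncomputable def snorm (Γ : BPA C A) (r : List C → List C → Prop)
    (α : List C) : ℕ∞ :=
  sInf {n : ℕ∞ | ∃ k : ℕ, n = (k : ℕ∞) ∧ NormWitness Γ r α k}

/-- A decreasing bisimulation: an equivalence relation such that
(1) `α ≍ ε` implies `α ⟹ ε`, and (2) norm-decreasing transitions can be
matched after a silent `≍`-preserving chain. -/
def IsDecreasingBisim (Γ : BPA C A) (r : List C → List C → Prop) : Prop :=
  Equivalence r ∧ (∀ α, r α [] → Γ.TauStar α []) ∧
  ∀ α β ℓ α', r α β → Γ.Step ℓ α α' → Γ.snorm r α' < Γ.snorm r α →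
    ∃ β'' β', RelChain (Γ.Step Γ.tau) r β β β'' ∧ Γ.Step ℓ β'' β' ∧ r α' β'

end BPA
/-
Since the constants of `R` are ground, `=_R` is an `R`-bisimulation. Hence `≃_R` is reflexive, and
its equivalence closure is again an `R`-bisimulation: an answer to a challenge is passed along a
chain of `R`-bisimulations, and a silent answer that stays inside the class can only occur for an
inert challenge. So `≃_R` is an equivalence and itself an `R`-bisimulation. The `≍`-norm is
constant on `≃_R`-classes, so a step that lowers it leaves the class and has a matching answer
`β_R ⟹_R β'' —ℓ→_R β'` in the `R`-transition system. No process in the class of `β` is `ε`, since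
`α` has positive norm, so every `R`-step on the way starts from a nonempty normal form and is the
image of a real step from that normal form followed by any suffix over `R`; this turns the answer
into a real one from `β`.
-/

namespace BPA

variable {C A : Type}

section NormalForm

variable (R : Set C)

open Classical in
theorem nf_eq_rdropWhile (α : List C) : nf R α = α.rdropWhile fun X => decide (X ∈ R) := rfl

theorem nf_nf (α : List C) : nf R (nf R α) = nf R α := by
  simp only [nf_eq_rdropWhile, List.rdropWhile_idempotent]

open Classical in
theorem exists_nf_append_eq (α : List C) : ∃ s, (∀ X ∈ s, X ∈ R) ∧ nf R α ++ s = α :=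
  ⟨α.rtakeWhile fun X => decide (X ∈ R), fun _ hX => by simpa using List.mem_rtakeWhile_imp hX,
    List.rdropWhile_append_rtakeWhile⟩

theorem nf_append {ζ a : List C} (ha : ∀ X ∈ a, X ∈ R) : nf R (ζ ++ a) = nf R ζ := by
  simp only [nf, List.reverse_append]
  rw [List.dropWhile_append, if_pos]
  simp only [List.isEmpty_iff, List.dropWhile_eq_nil_iff]
  intro x hx
  simpa using ha x (List.mem_reverse.mp hx)

theorem REq_iff_nf_eq {α β : List C} : REq R α β ↔ nf R α = nf R β := by
  constructor
  · rintro ⟨ζ, a, b, rfl, rfl, ha, hb⟩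
    rw [nf_append R ha, nf_append R hb]
  · intro h
    obtain ⟨s, hs, hαs⟩ := exists_nf_append_eq R α
    obtain ⟨t, ht, hβt⟩ := exists_nf_append_eq R β
    exact ⟨nf R α, s, t, hαs.symm, by rw [h, hβt], hs, ht⟩

theorem REq_nf (α : List C) : REq R α (nf R α) := (REq_iff_nf_eq R).2 (nf_nf R α).symm

theorem REq_append_self {ζ d : List C} (hd : ∀ X ∈ d, X ∈ R) : REq R (ζ ++ d) ζ :=
  (REq_iff_nf_eq R).2 (nf_append R hd)

end NormalForm

section Steps

variable {Γ : BPA C A}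

theorem Step.append_right {ℓ : A} {p q : List C} (h : Γ.Step ℓ p q) (s : List C) :
    Γ.Step ℓ (p ++ s) (q ++ s) := by
  obtain ⟨X, γ, β, hX, rfl, rfl⟩ := h
  exact ⟨X, γ, β ++ s, hX, rfl, by rw [List.append_assoc]⟩

theorem Step.of_append_left {ℓ : A} {ζ a q : List C} (h : Γ.Step ℓ (ζ ++ a) q) (hζ : ζ ≠ []) :
    ∃ ζ', Γ.Step ℓ ζ ζ' ∧ q = ζ' ++ a := by
  obtain ⟨X, γ, β, hX, hζa, rfl⟩ := h
  obtain ⟨Y, ζ, rfl⟩ := List.exists_cons_of_ne_nil hζ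
  obtain ⟨rfl, rfl⟩ := List.cons_eq_cons.1 hζa
  exact ⟨γ ++ ζ, ⟨Y, γ, ζ, hX, rfl, rfl⟩, (List.append_assoc _ _ _).symm⟩

theorem TauStar.append_right {p q : List C} (h : Γ.TauStar p q) (s : List C) :
    Γ.TauStar (p ++ s) (q ++ s) :=
  ReflTransGen.lift (· ++ s) (fun _ _ (hst : Γ.Step Γ.tau _ _) => hst.append_right s) _ _ h

theorem tauStar_nil_of_forall_mem_groundC {s : List C} (hs : ∀ X ∈ s, X ∈ Γ.GroundC) :
    Γ.TauStar s [] := by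
  induction s with
  | nil => exact .refl
  | cons X s ih =>
    simp only [List.mem_cons, forall_eq_or_imp] at hs
    exact ReflTransGen.trans (TauStar.append_right hs.1 s) (ih hs.2)

theorem TauStar.nil_of_append {ζ a : List C} (h : Γ.TauStar (ζ ++ a) []) : Γ.TauStar ζ [] := by
  generalize hp : ζ ++ a = p at h
  induction h using ReflTransGen.head_induction_on generalizing ζ with
  | refl =>
    obtain ⟨rfl, -⟩ := List.append_eq_nil_iff.1 hp
    exact .refl
  | head hst _ ih =>
    subst hp
    rcases eq_or_ne ζ [] with rfl | hζ
    · exact .refl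
    obtain ⟨ζ', hζ', rfl⟩ := hst.of_append_left hζ
    exact .head hζ' (ih rfl)

variable {R : Set C}

theorem StepR.nf_eq {ℓ : A} {ζ η : List C} (h : Γ.StepR R ℓ ζ η) : nf R η = η := by
  obtain ⟨_, _, -, rfl, -⟩ := h
  exact nf_nf R _

theorem StepR.exists_step_append {ℓ : A} {θ η c : List C} (h : Γ.StepR R ℓ θ η) (hθ : θ ≠ [])
    (hc : ∀ X ∈ c, X ∈ R) : ∃ d, (∀ X ∈ d, X ∈ R) ∧ Γ.Step ℓ (θ ++ c) (η ++ d) := by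
  obtain ⟨p, q, rfl, rfl, hpq⟩ := h
  obtain ⟨s, hs, hps⟩ := exists_nf_append_eq R p
  rw [← hps] at hpq
  obtain ⟨ζ, hζ, rfl⟩ := hpq.of_append_left hθ
  obtain ⟨d, hd, hζd⟩ := exists_nf_append_eq R ζ
  refine ⟨d ++ c, fun X hX => (List.mem_append.1 hX).elim (hd X) (hc X), ?_⟩
  rw [nf_append R hs, ← List.append_assoc, hζd]
  exact hζ.append_right c

end Steps

section RelChain

variable {s r r' : List C → List C → Prop} {a a' x y : List C}

theorem RelChain.rel_anchor (h : RelChain s r a x y) (hx : r a x) : r a y := by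
  rcases ReflTransGen.cases_tail h with rfl | ⟨_, -, -, hy⟩
  exacts [hx, hy]

theorem RelChain.mono (h : RelChain s r a x y) (hr : ∀ z, r a z → r' a' z) :
    RelChain s r' a' x y :=
  ReflTransGen.mono (fun _ v hv => ⟨hv.1, hr v hv.2⟩) _ _ h

theorem RelChain.nf_eq {Γ : BPA C A} {R : Set C} {z : List C}
    (h : RelChain (Γ.StepR R Γ.tau) r a (nf R z) y) : nf R y = y := by
  rcases ReflTransGen.cases_tail h with rfl | ⟨_, -, hst, -⟩
  exacts [nf_nf R z, hst.nf_eq]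

end RelChain

section RBisimulation

variable {Γ : BPA C A} {R : Set C}

theorem isRBisim_REq (hR : R ⊆ Γ.GroundC) : Γ.IsRBisim R (REq R) := by
  have hnf {α β : List C} : REq R α β ↔ nf R α = nf R β := REq_iff_nf_eq R
  refine ⟨⟨fun _ => hnf.2 rfl, fun h => hnf.2 (hnf.1 h).symm, fun h h' => hnf.2
    ((hnf.1 h).trans (hnf.1 h'))⟩, fun _ _ h => h, fun α β hαβ => ⟨?_, ?_, ?_⟩⟩
  · intro hα
    obtain ⟨s, -, hαs⟩ := exists_nf_append_eq R α
    obtain ⟨t, ht, hβt⟩ := exists_nf_append_eq R β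
    rw [← hαs] at hα
    rw [← hβt, ← hnf.1 hαβ, ← List.nil_append []]
    exact ReflTransGen.trans (hα.nil_of_append.append_right t)
      (tauStar_nil_of_forall_mem_groundC fun X hX => hR (ht X hX))
  · intro α' hst hαα'
    refine ⟨nf R β, nf R α', .refl, ⟨α, α', (hnf.1 hαβ).symm, rfl, hst⟩, fun h => hαα' ?_,
      REq_nf R α'⟩
    exact hnf.2 (by simpa only [nf_nf, hnf.1 hαβ] using hnf.1 h)
  · intro _ _ α' hst
    exact ⟨nf R β, nf R α', .refl, ⟨α, α', (hnf.1 hαβ).symm, rfl, hst⟩, REq_nf R α'⟩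

theorem IsRBisim.rbisim {s : List C → List C → Prop} (hs : Γ.IsRBisim R s) {α β : List C}
    (h : s α β) : Γ.RBisim R α β :=
  ⟨s, hs, h⟩

theorem REq.rbisim (hR : R ⊆ Γ.GroundC) {α β : List C} (h : REq R α β) : Γ.RBisim R α β :=
  (isRBisim_REq hR).rbisim h

theorem RBisim.symm {α β : List C} (h : Γ.RBisim R α β) : Γ.RBisim R β α :=
  let ⟨s, hs, hαβ⟩ := h
  ⟨s, hs, hs.1.symm hαβ⟩

theorem IsRBisim.transfer_stepR {s : List C → List C → Prop} (hs : Γ.IsRBisim R s)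
    {x y ξ : List C} {a : A} (hxy : s x y) (h : Γ.StepR R a (nf R x) ξ) :
    (a = Γ.tau ∧ s ξ y) ∨ ∃ y'' y', RelChain (Γ.StepR R Γ.tau) s y (nf R y) y'' ∧
      Γ.StepR R a y'' y' ∧ s ξ y' := by
  obtain ⟨p, q, hxp, rfl, hpq⟩ := h
  have hpy : s p y := hs.1.trans (hs.2.1 p x ((REq_iff_nf_eq R).2 hxp.symm)) hxy
  have hq : s (nf R q) q := hs.1.symm (hs.2.1 _ _ (REq_nf R q))
  by_cases ha : a = Γ.tau
  · subst ha
    by_cases hpq' : s p q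
    · exact .inl ⟨rfl, hs.1.trans hq (hs.1.trans (hs.1.symm hpq') hpy)⟩
    obtain ⟨y'', y', hc, hst, -, hqy⟩ := (hs.2.2 p y hpy).2.1 q hpq hpq'
    exact .inr ⟨y'', y', hc, hst, hs.1.trans hq hqy⟩
  obtain ⟨y'', y', hc, hst, hqy⟩ := (hs.2.2 p y hpy).2.2 a ha q hpq
  exact .inr ⟨y'', y', hc, hst, hs.1.trans hq hqy⟩

theorem IsRBisim.exists_stepR_of_step {s : List C → List C → Prop} (hs : Γ.IsRBisim R s)
    {α β α' : List C} {ℓ : A} (hαβ : s α β) (hst : Γ.Step ℓ α α') (hαα' : ¬ s α α') :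
    ∃ β'' β', RelChain (Γ.StepR R Γ.tau) s β (nf R β) β'' ∧ Γ.StepR R ℓ β'' β' ∧ s α' β' := by
  by_cases hℓ : ℓ = Γ.tau
  · subst hℓ
    obtain ⟨β'', β', hc, hst', -, hα'β'⟩ := (hs.2.2 α β hαβ).2.1 α' hst hαα'
    exact ⟨β'', β', hc, hst', hα'β'⟩
  · exact (hs.2.2 α β hαβ).2.2 ℓ hℓ α' hst

theorem reflTransGen_rbisim_symm {α β : List C} (h : ReflTransGen (Γ.RBisim R) α β) :
    ReflTransGen (Γ.RBisim R) β α :=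
  haveI : Std.Symm (Γ.RBisim R) := ⟨fun _ _ => RBisim.symm⟩
  Std.Symm.symm _ _ h

theorem reflTransGen_rbisim_nf (hR : R ⊆ Γ.GroundC) (α : List C) :
    ReflTransGen (Γ.RBisim R) α (nf R α) :=
  .single ((REq_nf R α).rbisim hR)

theorem RelChain.trans_isRBisim (hR : R ⊆ Γ.GroundC) {s : List C → List C → Prop}
    (hs : Γ.IsRBisim R s) {y ψ ψ'' : List C}
    (h : RelChain (Γ.StepR R Γ.tau) (ReflTransGen (Γ.RBisim R)) y (nf R y) ψ)
    (h' : RelChain (Γ.StepR R Γ.tau) s ψ (nf R ψ) ψ'') :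
    RelChain (Γ.StepR R Γ.tau) (ReflTransGen (Γ.RBisim R)) y (nf R y) ψ'' := by
  have hyψ := h.rel_anchor (reflTransGen_rbisim_nf hR y)
  rw [h.nf_eq] at h'
  exact ReflTransGen.trans h (h'.mono fun _ hz => hyψ.tail (hs.rbisim hz))

theorem IsRBisim.exists_relChain_of_relChain (hR : R ⊆ Γ.GroundC) {s : List C → List C → Prop}
    (hs : Γ.IsRBisim R s) {x y θ : List C} (hxy : s x y)
    (hc : RelChain (Γ.StepR R Γ.tau) (ReflTransGen (Γ.RBisim R)) x (nf R x) θ) :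
    ∃ ψ, RelChain (Γ.StepR R Γ.tau) (ReflTransGen (Γ.RBisim R)) y (nf R y) ψ ∧ s θ ψ := by
  unfold RelChain at hc
  induction hc with
  | refl =>
    exact ⟨nf R y, .refl, hs.1.trans (hs.1.symm (hs.2.1 _ _ (REq_nf R x)))
      (hs.1.trans hxy (hs.2.1 _ _ (REq_nf R y)))⟩
  | @tail θ₀ θ hc hst ih =>
    obtain ⟨ψ, hcψ, hθ₀ψ⟩ := ih
    rw [← RelChain.nf_eq hc] at hst
    rcases hs.transfer_stepR hθ₀ψ hst.1 with ⟨-, hθψ⟩ | ⟨ψ'', ψ', hc', hst', hθψ'⟩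
    · exact ⟨ψ, hcψ, hθψ⟩
    · have hyψ' : ReflTransGen (Γ.RBisim R) y ψ' :=
        ((reflTransGen_rbisim_symm (.single (hs.rbisim hxy))).trans hst.2).tail (hs.rbisim hθψ')
      exact ⟨ψ', ReflTransGen.tail (hcψ.trans_isRBisim hR hs hc') ⟨hst', hyψ'⟩, hθψ'⟩

variable (Γ R) in
def Answers (a : A) (α' z : List C) : Prop :=
  ∃ z'' z', RelChain (Γ.StepR R Γ.tau) (ReflTransGen (Γ.RBisim R)) z (nf R z) z'' ∧
    Γ.StepR R a z'' z' ∧ ReflTransGen (Γ.RBisim R) α' z'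

theorem Answers.of_isRBisim (hR : R ⊆ Γ.GroundC) {s : List C → List C → Prop}
    (hs : Γ.IsRBisim R s) {x y α' : List C} {a : A} (hxy : s x y) (h : Answers Γ R a α' x) :
    Answers Γ R a α' y ∨ (a = Γ.tau ∧ ReflTransGen (Γ.RBisim R) α' y) := by
  obtain ⟨x'', x', hc, hst, hα'x'⟩ := h
  obtain ⟨ψ, hcψ, hx''ψ⟩ := hs.exists_relChain_of_relChain hR hxy hc
  rw [← hc.nf_eq] at hst
  rcases hs.transfer_stepR hx''ψ hst with ⟨rfl, hx'ψ⟩ | ⟨ψ'', ψ', hc', hst', hx'ψ'⟩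
  · refine .inr ⟨rfl, (hα'x'.tail (hs.rbisim hx'ψ)).trans ?_⟩
    exact reflTransGen_rbisim_symm (hcψ.rel_anchor (reflTransGen_rbisim_nf hR y))
  · exact .inl ⟨ψ'', ψ', hcψ.trans_isRBisim hR hs hc', hst', hα'x'.tail (hs.rbisim hx'ψ')⟩

theorem answers_of_reflTransGen_rbisim (hR : R ⊆ Γ.GroundC) {α α' z : List C} {a : A}
    (hst : Γ.Step a α α') (hz : ReflTransGen (Γ.RBisim R) α z) :
    Answers Γ R a α' z ∨ (a = Γ.tau ∧ ReflTransGen (Γ.RBisim R) α' z) := by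
  induction hz with
  | refl =>
    exact .inl ⟨nf R α, nf R α', .refl, ⟨α, α', rfl, rfl, hst⟩, reflTransGen_rbisim_nf hR α'⟩
  | tail _ hyz ih =>
    obtain ⟨s, hs, hyz⟩ := hyz
    rcases ih with h | ⟨rfl, h⟩
    · exact h.of_isRBisim hR hs hyz
    · exact .inr ⟨rfl, h.tail (hs.rbisim hyz)⟩

theorem isRBisim_reflTransGen_rbisim (hR : R ⊆ Γ.GroundC) :
    Γ.IsRBisim R (ReflTransGen (Γ.RBisim R)) := by
  refine ⟨⟨fun _ => .refl, reflTransGen_rbisim_symm, .trans⟩, fun _ _ h => .single (h.rbisim hR),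
    fun α β hαβ => ⟨?_, ?_, ?_⟩⟩
  · intro hα
    induction hαβ with
    | refl => exact hα
    | tail _ h ih =>
      obtain ⟨s, hs, h⟩ := h
      exact (hs.2.2 _ _ h).1 ih
  · intro α' hst hαα'
    rcases answers_of_reflTransGen_rbisim hR hst hαβ with ⟨β'', β', hc, hst', hα'β'⟩ | ⟨-, hα'β⟩
    · refine ⟨β'', β', hc, hst', fun hβ''β' => hαα' ?_, hα'β'⟩
      have hββ'' := hc.rel_anchor (reflTransGen_rbisim_nf hR β)
      exact ((hαβ.trans hββ'').trans hβ''β').trans (reflTransGen_rbisim_symm hα'β')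
    · exact absurd (hαβ.trans (reflTransGen_rbisim_symm hα'β)) hαα'
  · intro a ha α' hst
    rcases answers_of_reflTransGen_rbisim hR hst hαβ with h | ⟨rfl, -⟩
    exacts [h, absurd rfl ha]

theorem isRBisim_rbisim (hR : R ⊆ Γ.GroundC) : Γ.IsRBisim R (Γ.RBisim R) := by
  have h : Γ.RBisim R = ReflTransGen (Γ.RBisim R) := by
    ext α β
    exact ⟨.single, (isRBisim_reflTransGen_rbisim hR).rbisim⟩
  rw [h]
  exact isRBisim_reflTransGen_rbisim hR

theorem exists_relChain_step_of_relChain_stepR (hR : R ⊆ Γ.GroundC) {β θ : List C}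
    (hβ : ∀ η, Γ.RBisim R β η → η ≠ [])
    (hc : RelChain (Γ.StepR R Γ.tau) (Γ.RBisim R) β (nf R β) θ) :
    ∃ c, (∀ X ∈ c, X ∈ R) ∧ RelChain (Γ.Step Γ.tau) (Γ.RBisim R) β β (θ ++ c) := by
  unfold RelChain at hc
  induction hc with
  | refl =>
    obtain ⟨s, hs, hβs⟩ := exists_nf_append_eq R β
    exact ⟨s, hs, by rw [hβs]; exact .refl⟩
  | @tail θ₀ θ hc hst ih =>
    obtain ⟨c, hcR, hchain⟩ := ih
    have hθ₀ : θ₀ ≠ [] := hβ θ₀ (RelChain.rel_anchor hc ((REq_nf R β).rbisim hR))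
    obtain ⟨d, hdR, hst'⟩ := hst.1.exists_step_append hθ₀ hcR
    refine ⟨d, hdR, hchain.tail ⟨hst', (isRBisim_rbisim hR).1.trans hst.2 ?_⟩⟩
    exact ((REq_append_self R hdR).rbisim hR).symm

end RBisimulation

section Norm

variable {Γ : BPA C A} {r : List C → List C → Prop}

theorem NormWitness.of_rel [IsTrans (List C) r] {α γ : List C} {k : ℕ} (h : r α γ)
    (hw : NormWitness Γ r γ k) : NormWitness Γ r α k := by
  cases hw with
  | zero _ h0 => exact .zero _ (_root_.trans h h0)
  | succ _ γ' δ ℓ k h1 h2 h3 => exact .succ _ γ' δ ℓ k (_root_.trans h h1) h2 h3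

theorem snorm_congr (hr : Equivalence r) {α γ : List C} (h : r α γ) :
    Γ.snorm r α = Γ.snorm r γ := by
  have : IsTrans (List C) r := ⟨fun _ _ _ => hr.trans⟩
  unfold snorm
  congr 1
  ext n
  exact exists_congr fun k => and_congr_right' ⟨(·.of_rel (hr.symm h)), (·.of_rel h)⟩

theorem snorm_eq_zero_of_rel_nil {α : List C} (h : r α []) : Γ.snorm r α = 0 :=
  nonpos_iff_eq_zero.1 (sInf_le ⟨0, Nat.cast_zero.symm, .zero α h⟩)

end Norm

end BPA

theorem RBisim_decreasing_bisim_general {C A : Type} (Γ : BPA C A)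
    (R : Set C) (hR : R ⊆ Γ.GroundC) :
    Γ.IsDecreasingBisim (Γ.RBisim R) := by
  have hbis := BPA.isRBisim_rbisim hR
  refine ⟨hbis.1, fun α h => (hbis.2.2 [] α (hbis.1.symm h)).1 .refl, ?_⟩
  intro α β ℓ α' hαβ hst hlt
  have hαα' : ¬ Γ.RBisim R α α' := fun h => hlt.ne (BPA.snorm_congr hbis.1 h).symm
  have hβ : ∀ η, Γ.RBisim R β η → η ≠ [] := by
    rintro η hη rfl
    rw [BPA.snorm_eq_zero_of_rel_nil (hbis.1.trans hαβ hη)] at hlt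
    exact not_lt_zero hlt
  obtain ⟨β'', β', hc, hst', hα'β'⟩ := hbis.exists_stepR_of_step hαβ hst hαα'
  obtain ⟨c, hcR, hchain⟩ := BPA.exists_relChain_step_of_relChain_stepR hR hβ hc
  obtain ⟨d, hdR, hst''⟩ :=
    hst'.exists_step_append (hβ β'' (hc.rel_anchor ((BPA.REq_nf R β).rbisim hR))) hcR
  have hβ'd : Γ.RBisim R β' (β' ++ d) := ((BPA.REq_append_self R hdR).rbisim hR).symm
  exact ⟨β'' ++ c, β' ++ d, hchain, hst'', hbis.1.trans hα'β' hβ'd⟩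

/-- `≃_R` is a decreasing bisimulation, for every `R ⊆ C_G`. -/
theorem RBisim_decreasing_bisim {C A : Type} (Γ : BPA C A) (hΓ : Γ.Normed)
    (R : Set C) (hR : R ⊆ Γ.GroundC) :
    Γ.IsDecreasingBisim (Γ.RBisim R) :=
  RBisim_decreasing_bisim_general Γ R hR
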